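/- arXiv:1307.3379 — 5 statements merged into one kernel-verified Lean document; each statement's English description precedes it below -/
import Mathlib

section
/- Let A be a commutative ring, Y ⊆ X = Spec A a closed subscheme defined by an ideal I, and Y_n the n-th infinitesimal thickening defined by I^n. Suppose the colimit functor colim Y_* (on commutative algebras, B ↦ colim_n Hom(A/I^n, B)) is representable by a scheme Z of finite type. Then there exists N such that Y_N = Y_m for all m ≥ N, i.e., I^N = I^{N+1}, and Z = Y_N. -/
/-!
The identity of `C` corresponds under `e` to a universal point `ι : A → C`, which kills some
`I ^ N`; by naturality (Yoneda) every point of `colim Y_*` factors through `ι` and so kills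
`I ^ N` as well. Applied to the quotient map `A → A ⧸ I ^ (N + 1)` this gives
`I ^ N ≤ I ^ (N + 1)`, and it shows that `A ⧸ I ^ N` represents the same functor as `C`.
-/

universe u

/-- The `B`-points of `colim Y_*`: algebra maps `A → B` killing some power of `I`. -/
abbrev ThickeningColimPoints (R : Type*) {A : Type*} [CommRing R] [CommRing A] [Algebra R A]
    (I : Ideal A) (B : Type*) [CommRing B] [Algebra R B] :=
  {f : A →ₐ[R] B // ∃ n : ℕ, ∀ x ∈ I ^ n, f x = 0}

def ThickeningColimPoints.quotientPoint (R : Type*) {A : Type*} [CommRing R] [CommRing A]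
    [Algebra R A] (I : Ideal A) (n : ℕ) : ThickeningColimPoints R I (A ⧸ I ^ n) :=
  ⟨Ideal.Quotient.mkₐ R (I ^ n), n, fun _ hx => Ideal.Quotient.eq_zero_iff_mem.2 hx⟩

namespace ThickeningColimPoints

variable {R : Type*} [CommRing R] {A C : Type u} [CommRing A] [Algebra R A] [CommRing C]
  [Algebra R C] {I : Ideal A}
  (e : ∀ (B : Type u) [CommRing B] [Algebra R B], (C →ₐ[R] B) ≃ ThickeningColimPoints R I B)

def universalPoint : A →ₐ[R] C := e C (AlgHom.id R C)

theorem exists_universalPoint_pow_eq_zero : ∃ N : ℕ, ∀ x ∈ I ^ N, universalPoint e x = 0 :=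
  (e C (AlgHom.id R C)).2

variable (hnat : ∀ (B B' : Type u) [CommRing B] [Algebra R B] [CommRing B'] [Algebra R B']
    (g : B →ₐ[R] B') (φ : C →ₐ[R] B),
    ((e B' (g.comp φ) : ThickeningColimPoints R I B') : A →ₐ[R] B')
      = g.comp ((e B φ : ThickeningColimPoints R I B) : A →ₐ[R] B))
include hnat

theorem coe_apply_eq_comp_universalPoint {B : Type u} [CommRing B] [Algebra R B]
    (φ : C →ₐ[R] B) : (e B φ : A →ₐ[R] B) = φ.comp (universalPoint e) := by
  simpa [universalPoint] using hnat C B φ (AlgHom.id R C)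

theorem coe_eq_symm_comp_universalPoint {B : Type u} [CommRing B] [Algebra R B]
    (f : ThickeningColimPoints R I B) :
    (f : A →ₐ[R] B) = ((e B).symm f).comp (universalPoint e) := by
  conv_lhs => rw [← (e B).apply_symm_apply f]
  exact coe_apply_eq_comp_universalPoint e hnat _

theorem apply_eq_zero_of_mem_pow {N : ℕ} (hN : ∀ x ∈ I ^ N, universalPoint e x = 0)
    {B : Type u} [CommRing B] [Algebra R B] (f : ThickeningColimPoints R I B) {x : A}
    (hx : x ∈ I ^ N) : (f : A →ₐ[R] B) x = 0 := by
  rw [coe_eq_symm_comp_universalPoint e hnat f, AlgHom.comp_apply, hN x hx, map_zero]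

theorem pow_eq_pow_succ {N : ℕ} (hN : ∀ x ∈ I ^ N, universalPoint e x = 0) :
    I ^ N = I ^ (N + 1) := by
  refine le_antisymm (fun x hx => ?_) (Ideal.pow_le_pow_right N.le_succ)
  exact Ideal.Quotient.eq_zero_iff_mem.1
    (apply_eq_zero_of_mem_pow e hnat hN (quotientPoint R I (N + 1)) hx)

noncomputable def algEquivQuotient {N : ℕ} (hN : ∀ x ∈ I ^ N, universalPoint e x = 0) :
    C ≃ₐ[R] A ⧸ I ^ N :=
  have hquot := coe_eq_symm_comp_universalPoint e hnat (quotientPoint R I N)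
  AlgEquiv.ofAlgHom ((e _).symm (quotientPoint R I N)) (Ideal.Quotient.liftₐ (I ^ N) _ hN)
    (Ideal.Quotient.algHom_ext R <| by
      ext a
      exact (DFunLike.congr_fun hquot a).symm)
    ((e C).injective <| Subtype.ext <| by
      rw [coe_apply_eq_comp_universalPoint e hnat, coe_apply_eq_comp_universalPoint e hnat,
        AlgHom.comp_assoc, ← hquot]
      ext a
      rfl)

end ThickeningColimPoints

theorem thickenings_stabilize_general
    (A : Type) [CommRing A] [Algebra ℂ A] (I : Ideal A)
    (C : Type) [CommRing C] [Algebra ℂ C]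
    (e : ∀ (B : Type) [CommRing B] [Algebra ℂ B],
      (C →ₐ[ℂ] B) ≃ {f : A →ₐ[ℂ] B // ∃ n : ℕ, ∀ x ∈ I ^ n, f x = 0})
    (hnat : ∀ (B B' : Type) [CommRing B] [Algebra ℂ B] [CommRing B'] [Algebra ℂ B']
      (g : B →ₐ[ℂ] B') (φ : C →ₐ[ℂ] B),
      ((e B' (g.comp φ) : {f : A →ₐ[ℂ] B' // ∃ n : ℕ, ∀ x ∈ I ^ n, f x = 0}) : A →ₐ[ℂ] B')
        = g.comp ((e B φ : {f : A →ₐ[ℂ] B // ∃ n : ℕ, ∀ x ∈ I ^ n, f x = 0}) : A →ₐ[ℂ] B)) :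
    ∃ N : ℕ, I ^ N = I ^ (N + 1) ∧ Nonempty (C ≃ₐ[ℂ] (A ⧸ I ^ N)) := by
  obtain ⟨N, hN⟩ := ThickeningColimPoints.exists_universalPoint_pow_eq_zero e
  exact ⟨N, ThickeningColimPoints.pow_eq_pow_succ e hnat hN,
    ⟨ThickeningColimPoints.algEquivQuotient e hnat hN⟩⟩

theorem thickenings_stabilize
    (A : Type) [CommRing A] [Algebra ℂ A] (I : Ideal A)
    (C : Type) [CommRing C] [Algebra ℂ C] (hC : Algebra.FiniteType ℂ C)
    (e : ∀ (B : Type) [CommRing B] [Algebra ℂ B],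
      (C →ₐ[ℂ] B) ≃ {f : A →ₐ[ℂ] B // ∃ n : ℕ, ∀ x ∈ I ^ n, f x = 0})
    (hnat : ∀ (B B' : Type) [CommRing B] [Algebra ℂ B] [CommRing B'] [Algebra ℂ B']
      (g : B →ₐ[ℂ] B') (φ : C →ₐ[ℂ] B),
      ((e B' (g.comp φ) : {f : A →ₐ[ℂ] B' // ∃ n : ℕ, ∀ x ∈ I ^ n, f x = 0}) : A →ₐ[ℂ] B')
        = g.comp ((e B φ : {f : A →ₐ[ℂ] B // ∃ n : ℕ, ∀ x ∈ I ^ n, f x = 0}) : A →ₐ[ℂ] B)) :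
    ∃ N : ℕ, I ^ N = I ^ (N + 1) ∧ Nonempty (C ≃ₐ[ℂ] (A ⧸ I ^ N)) :=
  thickenings_stabilize_general A I C e hnat
end

section
/- Consider the quiver Q with 9 vertices {0,…,8} and arrows 0→1, 2→0, 0→7, 8→0, 1→3, 3→2, 4→3, 3→5, 6→4, 5→6, 7→6, 6→8. Its simple cycles are exactly three 4-cycles and two 6-cycles, and every arrow lies on exactly one 4-cycle and exactly one 6-cycle. Consequently, there is no weighting w: Q₁ → ℤ of the arrows and positive integer d > 0 such that every simple cycle has total weight d. -/
/-! Every arrow lies on exactly one of the three 4-cycles and on exactly one of the two 6-cycles,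
so both families decompose the arrow set. If every simple cycle had weight `d`, summing over
either family would give the total weight of all arrows, hence `3 • d = 2 • d` and `d = 0`. -/

/-- `l` is a simple (directed) cycle of the quiver with arrow set `A`,
source map `src` and target map `tgt`. -/
def IsSimpleCycle {A V : Type} (src tgt : A → V) (l : List A) : Prop :=
  l ≠ [] ∧ List.Chain' (fun x y => tgt x = src y) l ∧
  (∀ h : l ≠ [], tgt (l.getLast h) = src (l.head h)) ∧
  (l.map src).Nodup

/-- Sources of the 12 arrows, in the order listed above. -/
def src9 : Fin 12 → Fin 9 := ![0, 2, 0, 8, 1, 3, 4, 3, 6, 5, 7, 6]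

/-- Targets of the 12 arrows, in the order listed above. -/
def tgt9 : Fin 12 → Fin 9 := ![1, 0, 7, 0, 3, 2, 3, 5, 4, 6, 6, 8]

instance IsSimpleCycle.decidablePred {A V : Type} [DecidableEq V] (src tgt : A → V) :
    DecidablePred (IsSimpleCycle src tgt) := fun _ => by
  unfold IsSimpleCycle List.Chain'; infer_instance

theorem List.sum_map_eq_nsmul_sum_of_count_eq {A M : Type*} [Fintype A] [DecidableEq A]
    [AddCommMonoid M] (w : A → M) {l : List A} {k : ℕ} (hl : ∀ a, l.count a = k) :
    (l.map w).sum = k • ∑ a, w a := by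
  rw [Finset.sum_list_map_count, Finset.smul_sum]
  refine Finset.sum_subset (Finset.subset_univ _) (fun a _ ha => ?_) |>.trans ?_
  · rw [List.mem_toFinset, ← List.count_eq_zero] at ha
    simp [ha]
  · simp [hl]

section CycleDecomposition

variable {A V : Type} [Fintype A] [DecidableEq A] (src tgt : A → V)

def IsCycleDecomposition (cs : List (List A)) : Prop :=
  (∀ c ∈ cs, IsSimpleCycle src tgt c) ∧ ∀ a, cs.flatten.count a = 1

variable {src tgt}

theorem IsCycleDecomposition.length_nsmul_eq_sum {M : Type*} [AddCommMonoid M]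
    {w : A → M} {d : M} (hw : ∀ l, IsSimpleCycle src tgt l → (l.map w).sum = d)
    {cs : List (List A)} (hcs : IsCycleDecomposition src tgt cs) :
    cs.length • d = ∑ a, w a :=
  calc cs.length • d = (cs.map fun c => (c.map w).sum).sum := by
        rw [List.map_congr_left fun c hc => hw c (hcs.1 c hc), List.map_const',
          List.sum_replicate]
    _ = (cs.flatten.map w).sum := by rw [List.map_flatten, List.sum_flatten, List.map_map]; rfl
    _ = ∑ a, w a := by rw [List.sum_map_eq_nsmul_sum_of_count_eq w hcs.2, one_smul]

theorem eq_zero_of_isCycleDecomposition_of_length_ne {M : Type*} [AddCommGroup M]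
    [IsAddTorsionFree M] {w : A → M} {d : M}
    (hw : ∀ l, IsSimpleCycle src tgt l → (l.map w).sum = d)
    {cs₁ cs₂ : List (List A)} (h₁ : IsCycleDecomposition src tgt cs₁)
    (h₂ : IsCycleDecomposition src tgt cs₂) (hlen : cs₁.length ≠ cs₂.length) : d = 0 := by
  have h : (cs₁.length : ℤ) • d = (cs₂.length : ℤ) • d := by
    rw [natCast_zsmul, natCast_zsmul, h₁.length_nsmul_eq_sum hw, h₂.length_nsmul_eq_sum hw]
  rwa [← sub_eq_zero, ← sub_smul, IsAddTorsionFree.zsmul_eq_zero_iff_right] at h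
  exact sub_ne_zero.2 (by exact_mod_cast hlen)

end CycleDecomposition

def fourCycles9 : List (List (Fin 12)) := [[0, 4, 5, 1], [6, 7, 9, 8], [2, 10, 11, 3]]

def sixCycles9 : List (List (Fin 12)) := [[0, 4, 7, 9, 11, 3], [2, 10, 8, 6, 5, 1]]

theorem isCycleDecomposition_fourCycles9 : IsCycleDecomposition src9 tgt9 fourCycles9 := by
  unfold IsCycleDecomposition fourCycles9 src9 tgt9; decide

theorem isCycleDecomposition_sixCycles9 : IsCycleDecomposition src9 tgt9 sixCycles9 := by
  unfold IsCycleDecomposition sixCycles9 src9 tgt9; decide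

theorem no_positive_cycle_grading_nine_vertex_quiver :
    ¬ ∃ (w : Fin 12 → ℤ) (d : ℤ), 0 < d ∧
      ∀ l : List (Fin 12), IsSimpleCycle src9 tgt9 l → (l.map w).sum = d := by
  rintro ⟨w, d, hd, hw⟩
  have hd0 : d = 0 := eq_zero_of_isCycleDecomposition_of_length_ne hw
    isCycleDecomposition_fourCycles9 isCycleDecomposition_sixCycles9 (by decide)
  exact hd.ne' hd0
end

section
/- Consider the quiver Q with 5 vertices {0,1,2,3,4} and arrows 1→2, 3→1, 1→4, 0→1, 2→3, 4→2, 2→0, 3→4, 0→3, 4→0 (the arrows of two oppositely oriented 5-cycles' chords pattern as given). There is no weighting w: Q₁ → ℤ of the arrows such that all simple cycles of Q have the same positive total weight. -/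
/-- Sources of the 10 arrows, in the order listed above. -/
def src5 : Fin 10 → Fin 5 := ![1, 3, 1, 0, 2, 4, 2, 3, 0, 4]

/-- Targets of the 10 arrows, in the order listed above. -/
def tgt5 : Fin 10 → Fin 5 := ![2, 1, 4, 1, 3, 2, 0, 4, 3, 0]

section

variable {A V : Type} {src tgt : A → V}

theorem isSimpleCycle_cons_iff {a : A} {l : List A} :
    IsSimpleCycle src tgt (a :: l) ↔
      ((a :: l) ++ [a]).IsChain (fun x y => tgt x = src y) ∧ ((a :: l).map src).Nodup := by
  refine ⟨fun ⟨_, hchain, hclosed, hnodup⟩ => ⟨hchain.append (.singleton a) ?_, hnodup⟩,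
    fun ⟨hchain, hnodup⟩ => ⟨List.cons_ne_nil a l, hchain.left_of_append,
      fun h => hchain.rel_getLast_head_of_append h (List.cons_ne_nil a []), hnodup⟩⟩
  simpa [List.getLast?_eq_some_getLast] using hclosed (List.cons_ne_nil a l)

instance [DecidableEq V] : DecidablePred (IsSimpleCycle src tgt)
  | [] => isFalse fun h => h.1 rfl
  | _ :: _ => decidable_of_iff' _ isSimpleCycle_cons_iff

theorem List.sum_map_flatten_of_forall_sum_map_eq {M : Type} [AddMonoid M] {w : A → M} {d : M}
    {L : List (List A)} (h : ∀ l ∈ L, (l.map w).sum = d) :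
    (L.flatten.map w).sum = L.length • d := by
  rw [List.map_flatten, List.sum_flatten, List.map_map,
    List.map_congr_left (f := List.sum ∘ List.map w) (g := fun _ => d) h, List.map_const',
    List.sum_replicate]

theorem eq_zero_of_perm_flatten_of_length_ne {M : Type} [AddCommGroup M] [IsAddTorsionFree M]
    {w : A → M} {d : M} (hw : ∀ l, IsSimpleCycle src tgt l → (l.map w).sum = d)
    {L₁ L₂ : List (List A)} (h₁ : ∀ l ∈ L₁, IsSimpleCycle src tgt l)
    (h₂ : ∀ l ∈ L₂, IsSimpleCycle src tgt l) (hperm : L₁.flatten.Perm L₂.flatten)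
    (hlen : L₁.length ≠ L₂.length) : d = 0 := by
  by_contra hd
  have hsum : L₁.length • d = L₂.length • d := by
    rw [← List.sum_map_flatten_of_forall_sum_map_eq fun l hl => hw l (h₁ l hl),
      ← List.sum_map_flatten_of_forall_sum_map_eq fun l hl => hw l (h₂ l hl)]
    exact (hperm.map w).sum_eq
  rw [← natCast_zsmul, ← natCast_zsmul, smul_left_inj hd] at hsum
  exact hlen (mod_cast hsum)

end

theorem no_positive_cycle_grading_five_vertex_quiver :
    ¬ ∃ (w : Fin 10 → ℤ) (d : ℤ), 0 < d ∧
      ∀ l : List (Fin 10), IsSimpleCycle src5 tgt5 l → (l.map w).sum = d := by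
  rintro ⟨w, d, hd, hw⟩
  -- the two families of cycles above, written as lists of arrow indices
  refine hd.ne' (eq_zero_of_perm_flatten_of_length_ne hw
    (L₁ := [[0, 4, 1], [0, 6, 3], [7, 9, 8]]) (L₂ := [[0, 4, 7, 9, 3], [0, 6, 8, 1]])
    ?_ ?_ ?_ ?_) <;> decide
end

section
/- Let A be a finitely generated commutative ℂ-algebra whose nilradical N satisfies N^r = 0, and let J be an associative ℂ-algebra with augmentation ideal J_{≥1} (spanned by paths of length ≥ 1 in a path algebra quotient). Let F be a finite projective A-module with a J-action by A-endomorphisms. If for every minimal prime p of A the action of J_{≥1} on F ⊗ κ(p) is nilpotent of order ≤ m, then the action of J_{≥1} on F is nilpotent of order at most m·r. -/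
/-!
Write `N = nilradical A = ⋂ p`, over the minimal primes `p`. As `F` is projective, `x ∈ N • F`
as soon as `φ x ∈ N` for every functional `φ : F → A`, and `a ∈ p` iff `a` vanishes in
`Frac(A/p)`. So an endomorphism that dies after base change to every `Frac(A/p)` maps `F` into
`N • F`. Grouping a product of `m * r` elements of `J₁` into `r` blocks of `m`, it maps `F` into
`N ^ r • F = 0`.
-/

open TensorProduct LinearMap

theorem Module.Projective.mem_smul_top_of_forall_dual_mem {R P : Type*} [CommRing R]
    [AddCommGroup P] [Module R P] [Module.Projective R P] (I : Ideal R) {x : P}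
    (hx : ∀ φ : P →ₗ[R] R, φ x ∈ I) : x ∈ I • (⊤ : Submodule R P) := by
  obtain ⟨s, hs⟩ := Module.projective_def.mp ‹_›
  rw [← hs x, Finsupp.linearCombination_apply]
  exact Submodule.sum_mem _ fun y _ =>
    Submodule.smul_mem_smul (hx (Finsupp.lapply y ∘ₗ s)) Submodule.mem_top

theorem TensorProduct.algebraMap_apply_eq_zero_of_one_tmul_eq_zero
    {R K M : Type*} [CommRing R] [CommRing K] [Algebra R K] [AddCommGroup M] [Module R M]
    {x : M} (hx : (1 : K) ⊗ₜ[R] x = 0) (φ : M →ₗ[R] R) : algebraMap R K (φ x) = 0 := by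
  simpa [Algebra.algebraMap_eq_smul_one] using congrArg (TensorProduct.rid R K ∘ lTensor K φ) hx

theorem Ideal.algebraMap_fractionRing_quotient_eq_zero_iff {A : Type*} [CommRing A]
    {p : Ideal A} [p.IsPrime] {a : A} :
    algebraMap A (FractionRing (A ⧸ p)) a = 0 ↔ a ∈ p := by
  rw [IsScalarTower.algebraMap_apply A (A ⧸ p), IsFractionRing.to_map_eq_zero_iff,
    Ideal.Quotient.algebraMap_eq, Ideal.Quotient.eq_zero_iff_mem]

theorem nilradical_eq_sInf_minimalPrimes (A : Type*) [CommRing A] :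
    nilradical A = sInf (minimalPrimes A) := by
  rw [minimalPrimes, Ideal.sInf_minimalPrimes, nilradical, Submodule.zero_eq_bot]

theorem LinearMap.range_le_nilradical_smul_top_of_baseChange_eq_zero
    {A M F : Type*} [CommRing A] [AddCommGroup M] [Module A M] [AddCommGroup F] [Module A F]
    [Module.Projective A F] {f : M →ₗ[A] F}
    (hf : ∀ p ∈ minimalPrimes A, f.baseChange (FractionRing (A ⧸ p)) = 0) :
    range f ≤ nilradical A • ⊤ := by
  rintro _ ⟨x, rfl⟩
  refine Module.Projective.mem_smul_top_of_forall_dual_mem _ fun φ => ?_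
  rw [nilradical_eq_sInf_minimalPrimes, Ideal.mem_sInf]
  intro p hp
  have := hp.1.1
  rw [← Ideal.algebraMap_fractionRing_quotient_eq_zero_iff]
  refine algebraMap_apply_eq_zero_of_one_tmul_eq_zero ?_ φ
  simpa using LinearMap.congr_fun (hf p hp) (1 ⊗ₜ x)

theorem Module.End.range_list_prod_le_pow_smul_top {R M : Type*} [CommRing R] [AddCommGroup M]
    [Module R M] (I : Ideal R) (L : List (Module.End R M))
    (hL : ∀ f ∈ L, range f ≤ I • ⊤) : range L.prod ≤ I ^ L.length • ⊤ := by
  induction L with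
  | nil => simp
  | cons f L ih =>
    rw [List.prod_cons, Module.End.mul_eq_comp, range_comp, List.length_cons, pow_succ,
      mul_smul]
    calc (range L.prod).map f ≤ (I ^ L.length • ⊤ : Submodule R M).map f :=
          Submodule.map_mono (ih fun g hg => hL g (List.mem_cons_of_mem f hg))
      _ = I ^ L.length • range f := by rw [Submodule.map_smul'', Submodule.map_top]
      _ ≤ I ^ L.length • I • ⊤ := Submodule.smul_mono le_rfl (hL f List.mem_cons_self)

theorem nilpotence_checked_at_geometric_points_general
    (A : Type) [CommRing A]
    (r : ℕ) (hr : nilradical A ^ r = ⊥)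
    (J : Type) [Ring J] (J₁ : Set J)
    (F : Type) [AddCommGroup F] [Module A F]
    [Module.Projective A F]
    (ρ : J →+* Module.End A F)
    (m : ℕ)
    (hfib : ∀ p : Ideal A, p ∈ minimalPrimes A →
      ∀ (K : Type) [Field K] [Algebra (A ⧸ p) K] [IsFractionRing (A ⧸ p) K]
        [Algebra A K] [IsScalarTower A (A ⧸ p) K],
      ∀ js : Fin m → J, (∀ i, js i ∈ J₁) →
        LinearMap.baseChange K
          (((List.ofFn fun i => ρ (js i)).prod : Module.End A F) : F →ₗ[A] F) = 0) :
    ∀ js : Fin (m * r) → J, (∀ i, js i ∈ J₁) →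
      ((List.ofFn fun i => ρ (js i)).prod : Module.End A F) = 0 := by
  intro js hjs
  rw [List.ofFn_mul', List.prod_flatten, List.map_ofFn, Function.comp_def, ← range_eq_bot,
    ← le_bot_iff]
  refine (Module.End.range_list_prod_le_pow_smul_top (nilradical A) _ ?_).trans_eq ?_
  · refine List.forall_mem_ofFn_iff.mpr fun _ =>
      range_le_nilradical_smul_top_of_baseChange_eq_zero fun p hp => ?_
    -- makes `FractionRing (A ⧸ p)` a field
    have := hp.1.1
    exact hfib p hp _ _ fun _ => hjs _
  · rw [List.length_ofFn, hr, Submodule.bot_smul]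

theorem nilpotence_checked_at_geometric_points
    (A : Type) [CommRing A] [Algebra ℂ A] (hA : Algebra.FiniteType ℂ A)
    (r : ℕ) (hr : nilradical A ^ r = ⊥)
    (J : Type) [Ring J] [Algebra ℂ J] (J₁ : Set J)
    (hJ₁ : ∀ x ∈ J₁, ∀ y : J, x * y ∈ J₁ ∧ y * x ∈ J₁)
    (F : Type) [AddCommGroup F] [Module A F]
    [Module.Finite A F] [Module.Projective A F]
    (ρ : J →+* Module.End A F)
    (m : ℕ)
    (hfib : ∀ p : Ideal A, p ∈ minimalPrimes A →
      ∀ (K : Type) [Field K] [Algebra (A ⧸ p) K] [IsFractionRing (A ⧸ p) K]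
        [Algebra A K] [IsScalarTower A (A ⧸ p) K],
      ∀ js : Fin m → J, (∀ i, js i ∈ J₁) →
        LinearMap.baseChange K
          (((List.ofFn fun i => ρ (js i)).prod : Module.End A F) : F →ₗ[A] F) = 0) :
    ∀ js : Fin (m * r) → J, (∀ i, js i ∈ J₁) →
      ((List.ofFn fun i => ρ (js i)).prod : Module.End A F) = 0 :=
  nilpotence_checked_at_geometric_points_general A r hr J J₁ F ρ m hfib
end

section
/- Let Q be a full subquiver of a quiver Q' (both finite, without loops), and define the restriction of a potential W on Q' to Q by keeping only those cycles lying entirely in Q, with the same coefficients. Then for any vertex i of Q, premutation at i commutes with restriction: μ'_i(W)|_Q = μ'_i(W|_Q), where on the left premutation is taken in Q' and restriction is to the premutated quiver μ'_i(Q) ⊆ μ'_i(Q'). -/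
/-!  Premutation commutes with restriction to a full subquiver.

A potential on a quiver with arrow set `A` is recorded as a coefficient
function `W : List A → ℂ` on cyclic paths (lists of arrows).  A full subquiver
is determined by a subset `S` of the vertices; its arrows are exactly the
ambient arrows with both endpoints in `S`, and restriction of a potential keeps
only cycles lying in the subquiver.

The premutated quiver at a vertex `i` has arrows `A ⊕ A × A`: `Sum.inl a` is
the arrow `a` (reversed, if adjacent to `i`), `Sum.inr (a, b)` is the composite
`[ab]` for a length-two path `b`-then-`a` through `i` (`tgt b = i = src a`);
`[ab]` runs from `src b` to `tgt a`.  The premutated potential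
`μ'_i(W) = W_i + Σ [ab] b̄ ā` is computed within the (sub)quiver determined by
`S`: the coefficient of a cycle `L` is `W` evaluated on the expansion of `L`
(if `L` involves no arrow adjacent to `i` other than through composites), plus
`1` for each correction triple `[ab]·b̄·ā` with `a, b` arrows of the subquiver.
The ambient premutation is `premut src tgt Set.univ i W`.  The theorem:
restricting the ambient premutated potential to the subquiver equals the
premutation, within the subquiver, of the restricted potential. -/

namespace PremutRestrict

variable {V A : Type}

open Classical in
/-- Restriction of a potential to the full subquiver on the vertex set `S`. -/
noncomputable def restrictPot (src tgt : A → V) (S : Set V) (W : List A → ℂ) :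
    List A → ℂ :=
  fun l => if ∀ e ∈ l, src e ∈ S ∧ tgt e ∈ S then W l else 0

/-- Expansion of a premutated arrow into the arrows of `Q` it involves
(in travel order: `[ab]` expands to `b` then `a`). -/
def expandArrow : A ⊕ A × A → List A
  | Sum.inl a => [a]
  | Sum.inr (a, b) => [b, a]

/-- The premutated arrow may occur in a cycle of the premutated potential:
composites must genuinely pass through `i`, and plain arrows must avoid `i`. -/
def validArrow (src tgt : A → V) (i : V) : A ⊕ A × A → Prop
  | Sum.inl a => src a ≠ i ∧ tgt a ≠ i
  | Sum.inr (a, b) => src a = i ∧ tgt b = i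

/-- The premutated arrow belongs to the premutation of the full subquiver
on `S`. -/
def inSub (src tgt : A → V) (S : Set V) : A ⊕ A × A → Prop
  | Sum.inl a => src a ∈ S ∧ tgt a ∈ S
  | Sum.inr (a, b) => src a ∈ S ∧ tgt a ∈ S ∧ src b ∈ S ∧ tgt b ∈ S

open Classical in
/-- The premutated potential `μ'_i(W) = W_i + Σ_{s(a)=t(b)=i} [ab] b̄ ā`,
computed within the full subquiver on the vertex set `S`. -/
noncomputable def premut (src tgt : A → V) (S : Set V) (i : V)
    (W : List A → ℂ) : List (A ⊕ A × A) → ℂ :=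
  fun L =>
    (@ite ℂ (∀ x ∈ L, validArrow src tgt i x) (Classical.propDecidable _)
      (W (L.flatMap expandArrow)) 0) +
    (@ite ℂ (∃ a b : A, inSub src tgt S (Sum.inr (a, b)) ∧ src a = i ∧ tgt b = i ∧
        L = [Sum.inr (a, b), Sum.inl b, Sum.inl a]) (Classical.propDecidable _) 1 0)

open Classical in
/-- Restriction of a potential on the premutated quiver to the premutated
subquiver on `S`. -/
noncomputable def restrictPotMu (src tgt : A → V) (S : Set V)
    (X : List (A ⊕ A × A) → ℂ) : List (A ⊕ A × A) → ℂ :=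
  fun L => @ite ℂ (∀ x ∈ L, inSub src tgt S x) (Classical.propDecidable _) (X L) 0

section

variable (src tgt : A → V) (S : Set V)

theorem inSub_iff_forall_mem_expandArrow (x : A ⊕ A × A) :
    inSub src tgt S x ↔ ∀ e ∈ expandArrow x, src e ∈ S ∧ tgt e ∈ S := by
  rcases x with a | ⟨a, b⟩ <;> simp [inSub, expandArrow, and_comm, and_assoc, and_left_comm]

theorem forall_inSub_iff_forall_mem_flatMap (L : List (A ⊕ A × A)) :
    (∀ x ∈ L, inSub src tgt S x) ↔
      ∀ e ∈ L.flatMap expandArrow, src e ∈ S ∧ tgt e ∈ S := by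
  simp only [List.forall_mem_flatMap, inSub_iff_forall_mem_expandArrow]

theorem inSub_univ (x : A ⊕ A × A) : inSub src tgt Set.univ x := by
  rcases x with a | ⟨a, b⟩ <;> simp [inSub]

/-- The reversed arrows `b̄`, `ā` of a correction triple `[ab]·b̄·ā` lie in the premutated
subquiver as soon as `[ab]` does. -/
theorem exists_correction_iff (i : V) (L : List (A ⊕ A × A)) :
    (∃ a b : A, inSub src tgt S (Sum.inr (a, b)) ∧ src a = i ∧ tgt b = i ∧
        L = [Sum.inr (a, b), Sum.inl b, Sum.inl a]) ↔
      (∀ x ∈ L, inSub src tgt S x) ∧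
        ∃ a b : A, inSub src tgt Set.univ (Sum.inr (a, b)) ∧ src a = i ∧ tgt b = i ∧
          L = [Sum.inr (a, b), Sum.inl b, Sum.inl a] := by
  constructor
  · rintro ⟨a, b, hab, ha, hb, rfl⟩
    refine ⟨?_, a, b, inSub_univ src tgt _, ha, hb, rfl⟩
    obtain ⟨hsa, hta, hsb, htb⟩ := hab
    simp [inSub, hsa, hta, hsb, htb]
  · rintro ⟨hL, a, b, -, ha, hb, rfl⟩
    exact ⟨a, b, hL _ List.mem_cons_self, ha, hb, rfl⟩

end

theorem premutation_commutes_with_restriction_general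
    (src tgt : A → V) (S : Set V) (i : V) (W : List A → ℂ) :
    restrictPotMu src tgt S (premut src tgt Set.univ i W)
      = premut src tgt S i (restrictPot src tgt S W) := by
  classical
  funext L
  have hcorr := exists_correction_iff src tgt S i L
  have hflat := forall_inSub_iff_forall_mem_flatMap src tgt S L
  unfold restrictPotMu premut restrictPot
  by_cases hS : ∀ x ∈ L, inSub src tgt S x
  · have hcorr' := hcorr.trans (and_iff_right hS)
    rw [if_pos hS, if_pos (hflat.1 hS), if_congr hcorr' rfl rfl]
  · have hcorr' := hcorr.trans (iff_false_intro (mt And.left hS))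
    rw [if_neg hS, if_neg (mt hflat.2 hS), if_congr hcorr' rfl rfl, if_neg not_false,
      ite_self, add_zero]

/-- Premutation at a vertex `i` of the full subquiver commutes with
restriction: `μ'_i(W)|_Q = μ'_i(W|_Q)`. -/
theorem premutation_commutes_with_restriction
    (src tgt : A → V) (S : Set V) (i : V) (hi : i ∈ S) (W : List A → ℂ) :
    restrictPotMu src tgt S (premut src tgt Set.univ i W)
      = premut src tgt S i (restrictPot src tgt S W) :=
  premutation_commutes_with_restriction_general src tgt S i W

end PremutRestrict
end
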